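/- Under the hypotheses of the local energy balance for the ε-dependent rod system — ε ≥ 0, μ > 0, a > 0, P_k = diag(1,1,k); continuously differentiable fields r̆, v, ω, n, κ : [0,1] × ℝ → ℝ³ (with continuous partial derivatives on [0,1] × ℝ); orthogonal-matrix-valued D; V : ℝ³ → ℝ continuously differentiable; satisfying D·∂_t r̆ = v, ε²μ²a P_{1/a}·∂_t n = ∂_s v + κ×v + e₃×ω + ε²μ²a (P_{1/a}·n)×ω, ∂_tκ = ∂_sω + κ×ω, ∂_t v = ∂_s n + κ×n + v×ω + D·(−∇V(r̆)), ε²P₂·∂_tω = μ⁻²(P_{2/a}·∂_sκ + κ×(P_{2/a}·κ)) + e₃×n + ε²(μ²a(P_{1/a}·n)×n + (P₂·ω)×ω) — assume in addition the cantilever boundary conditions v(0,t) = 0, ω(0,t) = 0, n(1,t) = 0 and κ(1,t) = 0 for all t. Then the total energy E_ε(t) := ∫₀¹ [½‖v‖² + (ε²/2) ω·(P₂·ω) + (ε²μ²a/2) n·(P_{1/a}·n) + (2μ²)⁻¹ κ·(P_{2/a}·κ) + V(r̆)](s,t) ds is constant in t. -/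

import Mathlib

open Matrix

noncomputable section

/-- Cross product on `ℝ³`. -/
def cross3 (a b : Fin 3 → ℝ) : Fin 3 → ℝ :=
  ![a 1 * b 2 - a 2 * b 1, a 2 * b 0 - a 0 * b 2, a 0 * b 1 - a 1 * b 0]

/-- Partial derivative with respect to the time variable `t` (second component). -/
def pt {E : Type*} [NormedAddCommGroup E] [NormedSpace ℝ E]
    (f : ℝ × ℝ → E) (p : ℝ × ℝ) : E :=
  deriv (fun t => f (p.1, t)) p.2

/-- Partial derivative with respect to the space variable `s` (first component). -/
def ps {E : Type*} [NormedAddCommGroup E] [NormedSpace ℝ E]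
    (f : ℝ × ℝ → E) (p : ℝ × ℝ) : E :=
  deriv (fun s => f (s, p.2)) p.1

/-- Coordinate gradient of a scalar function on `ℝ³`. -/
def grad3 (V : (Fin 3 → ℝ) → ℝ) (x : Fin 3 → ℝ) : Fin 3 → ℝ :=
  fun i => fderiv ℝ V x (Pi.single i 1)

/-- `P_k = diag(1,1,k)`. -/
def Pk (k : ℝ) : Matrix (Fin 3) (Fin 3) ℝ := Matrix.diagonal ![1, 1, k]

/-!
Along solutions, the energy density `W` and the flux `F = v·n + ω·m` satisfy the local balance
`∂ₜW = ∂ₛF`: after dotting the evolution equations with `v`, `ω`, `n` and `m`, every gyroscopic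
term is a triple product that cancels against its partner, and the force `D(−∇V)` cancels
`∂ₜV(r̆)` because `D` is orthogonal with `D ∂ₜr̆ = v`. Hence `dE/dt = F(1,t) − F(0,t)`, which
vanishes under the cantilever conditions.
-/

open Set

theorem cross3_eq_crossProduct (a b : Fin 3 → ℝ) : cross3 a b = a ⨯₃ b :=
  (cross_apply a b).symm

theorem dotProduct_cross_swap {R : Type*} [CommRing R] (u w v : Fin 3 → R) :
    u ⬝ᵥ w ⨯₃ v = -(v ⬝ᵥ w ⨯₃ u) := by
  rw [triple_product_permutation, triple_product_permutation, ← cross_anticomm, dotProduct_neg]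

theorem Matrix.IsSymm.dotProduct_mulVec_comm {n R : Type*} [Fintype n] [CommSemiring R]
    {M : Matrix n n R} (hM : M.IsSymm) (x y : n → R) : x ⬝ᵥ M *ᵥ y = M *ᵥ x ⬝ᵥ y := by
  rw [dotProduct_mulVec, ← mulVec_transpose, hM.eq]

theorem Pk_isSymm (k : ℝ) : (Pk k).IsSymm := isSymm_diagonal _

section Calculus

variable {𝕜 : Type*} [NontriviallyNormedField 𝕜] {ι κ : Type*} [Fintype ι]

theorem HasDerivAt.dotProduct {f g : 𝕜 → ι → 𝕜} {f' g' : ι → 𝕜} {t : 𝕜}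
    (hf : HasDerivAt f f' t) (hg : HasDerivAt g g' t) :
    HasDerivAt (fun x => f x ⬝ᵥ g x) (f' ⬝ᵥ g t + f t ⬝ᵥ g') t :=
  (HasDerivAt.fun_sum (u := Finset.univ) fun i _ =>
    (hasDerivAt_pi.1 hf i).mul (hasDerivAt_pi.1 hg i)).congr_deriv <| by
      rw [Finset.sum_add_distrib]; rfl

theorem HasDerivAt.mulVec (M : Matrix κ ι 𝕜) {f : 𝕜 → ι → 𝕜} {f' : ι → 𝕜} {t : 𝕜}
    (hf : HasDerivAt f f' t) : HasDerivAt (fun x => M *ᵥ f x) (M *ᵥ f') t :=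
  hasDerivAt_pi.2 fun i =>
    ((hasDerivAt_const t (M i)).dotProduct hf).congr_deriv <| by
      rw [zero_dotProduct, zero_add]; rfl

theorem HasDerivAt.dotProduct_mulVec_self {M : Matrix ι ι 𝕜} (hM : M.IsSymm)
    {f : 𝕜 → ι → 𝕜} {f' : ι → 𝕜} {t : 𝕜} (hf : HasDerivAt f f' t) :
    HasDerivAt (fun x => f x ⬝ᵥ M *ᵥ f x) (2 * (f t ⬝ᵥ M *ᵥ f')) t :=
  (hf.dotProduct (hf.mulVec M)).congr_deriv <| by
    rw [dotProduct_comm, ← hM.dotProduct_mulVec_comm, two_mul]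

variable {E : Type*} [NormedAddCommGroup E] [NormedSpace 𝕜 E] {n : WithTop ℕ∞}

@[fun_prop]
theorem ContDiff.dotProduct {f g : E → ι → 𝕜} (hf : ContDiff 𝕜 n f) (hg : ContDiff 𝕜 n g) :
    ContDiff 𝕜 n (fun x => f x ⬝ᵥ g x) :=
  ContDiff.sum fun i _ => (contDiff_pi.1 hf i).mul (contDiff_pi.1 hg i)

@[fun_prop]
theorem ContDiff.mulVec [Fintype κ] (M : Matrix ι κ 𝕜) {f : E → κ → 𝕜} (hf : ContDiff 𝕜 n f) :
    ContDiff 𝕜 n (fun x => M *ᵥ f x) :=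
  contDiff_pi.2 fun _ => contDiff_const.dotProduct hf

end Calculus

theorem fderiv_apply_eq_grad3_dotProduct (V : (Fin 3 → ℝ) → ℝ) (x u : Fin 3 → ℝ) :
    fderiv ℝ V x u = grad3 V x ⬝ᵥ u := by
  conv_lhs => rw [pi_eq_sum_univ' u]
  simp [grad3, dotProduct, mul_comm]

section PartialDerivatives

variable {E : Type*} [NormedAddCommGroup E] [NormedSpace ℝ E] {f : ℝ × ℝ → E}

theorem Differentiable.hasDerivAt_pt (hf : Differentiable ℝ f) (s t : ℝ) :
    HasDerivAt (fun t' => f (s, t')) (pt f (s, t)) t :=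
  ((hf _).comp t ((differentiableAt_const s).prodMk differentiableAt_id)).hasDerivAt

theorem Differentiable.hasDerivAt_ps (hf : Differentiable ℝ f) (s t : ℝ) :
    HasDerivAt (fun s' => f (s', t)) (ps f (s, t)) s :=
  ((hf _).comp s (differentiableAt_id.prodMk (differentiableAt_const t))).hasDerivAt

theorem pt_eq_fderiv (hf : Differentiable ℝ f) (p : ℝ × ℝ) : pt f p = fderiv ℝ f p (0, 1) :=
  ((hf p).hasFDerivAt.comp_hasDerivAt p.2
    ((hasDerivAt_const p.2 p.1).prodMk (hasDerivAt_id p.2))).deriv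

theorem ps_eq_fderiv (hf : Differentiable ℝ f) (p : ℝ × ℝ) : ps f p = fderiv ℝ f p (1, 0) :=
  ((hf p).hasFDerivAt.comp_hasDerivAt p.1
    ((hasDerivAt_id p.1).prodMk (hasDerivAt_const p.1 p.2))).deriv

theorem ContDiff.continuous_pt (hf : ContDiff ℝ 1 f) : Continuous (pt f) := by
  rw [funext (pt_eq_fderiv (hf.differentiable one_ne_zero))]
  exact (hf.continuous_fderiv one_ne_zero).clm_apply continuous_const

theorem ContDiff.continuous_ps (hf : ContDiff ℝ 1 f) : Continuous (ps f) := by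
  rw [funext (ps_eq_fderiv (hf.differentiable one_ne_zero))]
  exact (hf.continuous_fderiv one_ne_zero).clm_apply continuous_const

end PartialDerivatives

section Conservation

variable {E : Type*} [NormedAddCommGroup E] [NormedSpace ℝ E]

theorem hasDerivAt_intervalIntegral_pt {W : ℝ × ℝ → E} (hW : ContDiff ℝ 1 W) (a b t : ℝ) :
    HasDerivAt (fun t' => ∫ s in a..b, W (s, t')) (∫ s in a..b, pt W (s, t)) t := by
  obtain ⟨M, hM⟩ : ∃ M, ∀ p ∈ uIcc a b ×ˢ Metric.closedBall t 1, ‖pt W p‖ ≤ M :=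
    (isCompact_uIcc.prod (isCompact_closedBall t 1)).exists_bound_of_continuousOn
      hW.continuous_pt.continuousOn
  have hW_slice : ∀ t', Continuous fun s => W (s, t') := fun t' =>
    hW.continuous.comp (continuous_id.prodMk continuous_const)
  refine (intervalIntegral.hasDerivAt_integral_of_dominated_loc_of_deriv_le
    (F := fun t' s => W (s, t')) (F' := fun t' s => pt W (s, t')) (bound := fun _ => M)
    (Metric.ball_mem_nhds t one_pos) ?_ ?_ ?_ ?_ ?_ ?_).2
  · exact Filter.Eventually.of_forall fun t' => (hW_slice t').aestronglyMeasurable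
  · exact (hW_slice t).intervalIntegrable a b
  · exact (hW.continuous_pt.comp (continuous_id.prodMk continuous_const)).aestronglyMeasurable
  · exact MeasureTheory.ae_of_all _ fun s hs t' ht' =>
      hM (s, t') ⟨uIoc_subset_uIcc hs, Metric.ball_subset_closedBall ht'⟩
  · exact intervalIntegrable_const
  · exact MeasureTheory.ae_of_all _ fun s _ t' _ =>
      (hW.differentiable one_ne_zero).hasDerivAt_pt s t'

theorem intervalIntegral_ps_eq_sub [CompleteSpace E] {F : ℝ × ℝ → E} (hF : ContDiff ℝ 1 F)
    (a b t : ℝ) :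
    ∫ s in a..b, ps F (s, t) = F (b, t) - F (a, t) :=
  intervalIntegral.integral_eq_sub_of_hasDerivAt
    (fun s _ => (hF.differentiable one_ne_zero).hasDerivAt_ps s t)
    ((hF.continuous_ps.comp (continuous_id.prodMk continuous_const)).intervalIntegrable _ _)

theorem intervalIntegral_eq_of_pt_eq_ps [CompleteSpace E] {W F : ℝ × ℝ → E} {a b : ℝ}
    (hab : a ≤ b) (hW : ContDiff ℝ 1 W) (hF : ContDiff ℝ 1 F)
    (hbalance : ∀ p : ℝ × ℝ, p.1 ∈ Icc a b → pt W p = ps F p)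
    (hflux : ∀ t, F (a, t) = F (b, t)) (t₁ t₂ : ℝ) :
    ∫ s in a..b, W (s, t₁) = ∫ s in a..b, W (s, t₂) := by
  have hderiv : ∀ t, HasDerivAt (fun t' => ∫ s in a..b, W (s, t')) 0 t := fun t => by
    convert hasDerivAt_intervalIntegral_pt hW a b t using 1
    calc (0 : E) = F (b, t) - F (a, t) := by rw [hflux, sub_self]
      _ = ∫ s in a..b, ps F (s, t) := (intervalIntegral_ps_eq_sub hF a b t).symm
      _ = ∫ s in a..b, pt W (s, t) := intervalIntegral.integral_congr fun s hs =>
          (hbalance (s, t) (by rwa [uIcc_of_le hab] at hs)).symm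
  exact is_const_of_deriv_eq_zero (fun t => (hderiv t).differentiableAt)
    (fun t => (hderiv t).deriv) t₁ t₂

end Conservation

def energyDensity (ε μ a : ℝ) (r v ω n κ : ℝ × ℝ → Fin 3 → ℝ) (V : (Fin 3 → ℝ) → ℝ)
    (p : ℝ × ℝ) : ℝ :=
  (1 / 2) * (v p ⬝ᵥ v p) + (ε ^ 2 / 2) * (ω p ⬝ᵥ (Pk 2).mulVec (ω p))
    + (ε ^ 2 * μ ^ 2 * a / 2) * (n p ⬝ᵥ (Pk a⁻¹).mulVec (n p))
    + (2 * μ ^ 2)⁻¹ * (κ p ⬝ᵥ (Pk (2 / a)).mulVec (κ p)) + V (r p)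

/-- The power `v·n + ω·m` of contact force and couple, `m = μ⁻² P_{2/a} κ`. -/
def energyFlux (μ a : ℝ) (v ω n κ : ℝ × ℝ → Fin 3 → ℝ) (p : ℝ × ℝ) : ℝ :=
  v p ⬝ᵥ n p + (μ ^ 2)⁻¹ * (ω p ⬝ᵥ (Pk (2 / a)).mulVec (κ p))

section Energy

variable {ε μ a : ℝ} {r v ω n κ : ℝ × ℝ → Fin 3 → ℝ} {V : (Fin 3 → ℝ) → ℝ}

theorem contDiff_energyDensity (hr : ContDiff ℝ 1 r) (hv : ContDiff ℝ 1 v)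
    (hω : ContDiff ℝ 1 ω) (hn : ContDiff ℝ 1 n) (hκ : ContDiff ℝ 1 κ) (hV : ContDiff ℝ 1 V) :
    ContDiff ℝ 1 (energyDensity ε μ a r v ω n κ V) := by
  unfold energyDensity
  fun_prop

theorem contDiff_energyFlux (hv : ContDiff ℝ 1 v) (hω : ContDiff ℝ 1 ω) (hn : ContDiff ℝ 1 n)
    (hκ : ContDiff ℝ 1 κ) : ContDiff ℝ 1 (energyFlux μ a v ω n κ) := by
  unfold energyFlux
  fun_prop

theorem pt_energyDensity_eq_ps_energyFlux (hr : Differentiable ℝ r) (hv : Differentiable ℝ v)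
    (hω : Differentiable ℝ ω) (hn : Differentiable ℝ n) (hκ : Differentiable ℝ κ)
    (hV : Differentiable ℝ V) {D : Matrix (Fin 3) (Fin 3) ℝ} (hD : D * Dᵀ = 1) {s t : ℝ}
    (hkin : D *ᵥ pt r (s, t) = v (s, t))
    (hstrain : (ε ^ 2 * μ ^ 2 * a) • (Pk a⁻¹).mulVec (pt n (s, t))
        = ps v (s, t) + cross3 (κ (s, t)) (v (s, t)) + cross3 ![0, 0, 1] (ω (s, t))
          + (ε ^ 2 * μ ^ 2 * a) • cross3 ((Pk a⁻¹).mulVec (n (s, t))) (ω (s, t)))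
    (hcompat : pt κ (s, t) = ps ω (s, t) + cross3 (κ (s, t)) (ω (s, t)))
    (hlin : pt v (s, t) = ps n (s, t) + cross3 (κ (s, t)) (n (s, t))
        + cross3 (v (s, t)) (ω (s, t)) + D *ᵥ (-(grad3 V (r (s, t)))))
    (hang : (ε ^ 2) • (Pk 2).mulVec (pt ω (s, t))
        = (μ ^ 2)⁻¹ • ((Pk (2 / a)).mulVec (ps κ (s, t))
            + cross3 (κ (s, t)) ((Pk (2 / a)).mulVec (κ (s, t))))
          + cross3 ![0, 0, 1] (n (s, t))
          + (ε ^ 2) • ((μ ^ 2 * a) • cross3 ((Pk a⁻¹).mulVec (n (s, t))) (n (s, t))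
            + cross3 ((Pk 2).mulVec (ω (s, t))) (ω (s, t)))) :
    pt (energyDensity ε μ a r v ω n κ V) (s, t) = ps (energyFlux μ a v ω n κ) (s, t) := by
  have hW := ((((((hv.hasDerivAt_pt s t).dotProduct (hv.hasDerivAt_pt s t)).const_mul
      (1 / 2)).add
    (((hω.hasDerivAt_pt s t).dotProduct_mulVec_self (Pk_isSymm 2)).const_mul (ε ^ 2 / 2))).add
    (((hn.hasDerivAt_pt s t).dotProduct_mulVec_self (Pk_isSymm a⁻¹)).const_mul
      (ε ^ 2 * μ ^ 2 * a / 2))).add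
    (((hκ.hasDerivAt_pt s t).dotProduct_mulVec_self (Pk_isSymm (2 / a))).const_mul
      (2 * μ ^ 2)⁻¹)).add ((hV _).hasFDerivAt.comp_hasDerivAt t (hr.hasDerivAt_pt s t))
  have hF := ((hv.hasDerivAt_ps s t).dotProduct (hn.hasDerivAt_ps s t)).add
    (((hω.hasDerivAt_ps s t).dotProduct ((hκ.hasDerivAt_ps s t).mulVec (Pk (2 / a)))).const_mul
      (μ ^ 2)⁻¹)
  rw [show pt (energyDensity ε μ a r v ω n κ V) (s, t) = _ from hW.deriv,
    show ps (energyFlux μ a v ω n κ) (s, t) = _ from hF.deriv]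
  have hpt_r : pt r (s, t) = Dᵀ *ᵥ v (s, t) := by
    rw [← hkin, mulVec_mulVec, mul_eq_one_comm.mp hD, one_mulVec]
  have hpotential : v (s, t) ⬝ᵥ D *ᵥ (-grad3 V (r (s, t)))
      = -(grad3 V (r (s, t)) ⬝ᵥ pt r (s, t)) := by
    rw [hpt_r, dotProduct_mulVec, ← mulVec_transpose, dotProduct_neg, dotProduct_comm]
  have hv_dot := congrArg (v (s, t) ⬝ᵥ ·) hlin
  have hω_dot := congrArg (ω (s, t) ⬝ᵥ ·) hang
  have hn_dot := congrArg (n (s, t) ⬝ᵥ ·) hstrain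
  have hm_dot := congrArg ((Pk (2 / a)) *ᵥ κ (s, t) ⬝ᵥ ·) hcompat
  simp only [dotProduct_add, dotProduct_smul, smul_eq_mul, cross3_eq_crossProduct]
    at hv_dot hω_dot hn_dot hm_dot
  rw [fderiv_apply_eq_grad3_dotProduct]
  linear_combination hv_dot + hω_dot + hn_dot + (μ ^ 2)⁻¹ * hm_dot + hpotential
    + dot_self_cross (v (s, t)) (ω (s, t))
    + ε ^ 2 * dot_cross_self ((Pk 2) *ᵥ ω (s, t)) (ω (s, t))
    + dotProduct_cross_swap (v (s, t)) (κ (s, t)) (n (s, t))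
    + (μ ^ 2)⁻¹ * dotProduct_cross_swap (ω (s, t)) (κ (s, t)) ((Pk (2 / a)) *ᵥ κ (s, t))
    + dotProduct_cross_swap (ω (s, t)) ![0, 0, 1] (n (s, t))
    + ε ^ 2 * μ ^ 2 * a * dotProduct_cross_swap (ω (s, t)) ((Pk a⁻¹) *ᵥ n (s, t)) (n (s, t))
    + (μ ^ 2)⁻¹ * (Pk_isSymm (2 / a)).dotProduct_mulVec_comm (κ (s, t)) (pt κ (s, t))
    + (1 / 2) * dotProduct_comm (pt v (s, t)) (v (s, t))
    - dotProduct_comm (ps v (s, t)) (n (s, t))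
    - (μ ^ 2)⁻¹ * dotProduct_comm (ps ω (s, t)) ((Pk (2 / a)) *ᵥ κ (s, t))

end Energy

theorem cosserat_energy_conservation_cantilever_general
    (ε μ a : ℝ)
    (r v ω n κ : ℝ × ℝ → Fin 3 → ℝ)
    (hr : ContDiff ℝ 1 r) (hv : ContDiff ℝ 1 v) (hω : ContDiff ℝ 1 ω)
    (hn : ContDiff ℝ 1 n) (hκ : ContDiff ℝ 1 κ)
    (D : ℝ × ℝ → Matrix (Fin 3) (Fin 3) ℝ)
    (hD : ∀ p : ℝ × ℝ, D p * (D p)ᵀ = 1)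
    (V : (Fin 3 → ℝ) → ℝ) (hV : ContDiff ℝ 1 V)
    (hkin : ∀ p : ℝ × ℝ, p.1 ∈ Set.Icc (0:ℝ) 1 → (D p).mulVec (pt r p) = v p)
    (hstrain : ∀ p : ℝ × ℝ, p.1 ∈ Set.Icc (0:ℝ) 1 →
      (ε ^ 2 * μ ^ 2 * a) • (Pk a⁻¹).mulVec (pt n p)
        = ps v p + cross3 (κ p) (v p) + cross3 ![0, 0, 1] (ω p)
          + (ε ^ 2 * μ ^ 2 * a) • cross3 ((Pk a⁻¹).mulVec (n p)) (ω p))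
    (hcompat : ∀ p : ℝ × ℝ, p.1 ∈ Set.Icc (0:ℝ) 1 →
      pt κ p = ps ω p + cross3 (κ p) (ω p))
    (hlin : ∀ p : ℝ × ℝ, p.1 ∈ Set.Icc (0:ℝ) 1 →
      pt v p = ps n p + cross3 (κ p) (n p) + cross3 (v p) (ω p)
        + (D p).mulVec (-(grad3 V (r p))))
    (hang : ∀ p : ℝ × ℝ, p.1 ∈ Set.Icc (0:ℝ) 1 →
      (ε ^ 2) • (Pk 2).mulVec (pt ω p)
        = (μ ^ 2)⁻¹ • ((Pk (2 / a)).mulVec (ps κ p)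
            + cross3 (κ p) ((Pk (2 / a)).mulVec (κ p)))
          + cross3 ![0, 0, 1] (n p)
          + (ε ^ 2) • ((μ ^ 2 * a) • cross3 ((Pk a⁻¹).mulVec (n p)) (n p)
            + cross3 ((Pk 2).mulVec (ω p)) (ω p)))
    (hbc : ∀ t : ℝ, v (0, t) = 0 ∧ ω (0, t) = 0 ∧ n (1, t) = 0 ∧ κ (1, t) = 0) :
    ∀ t₁ t₂ : ℝ,
      (∫ s in (0:ℝ)..1, ((1 / 2) * (v (s, t₁) ⬝ᵥ v (s, t₁))
          + (ε ^ 2 / 2) * (ω (s, t₁) ⬝ᵥ (Pk 2).mulVec (ω (s, t₁)))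
          + (ε ^ 2 * μ ^ 2 * a / 2) * (n (s, t₁) ⬝ᵥ (Pk a⁻¹).mulVec (n (s, t₁)))
          + (2 * μ ^ 2)⁻¹ * (κ (s, t₁) ⬝ᵥ (Pk (2 / a)).mulVec (κ (s, t₁)))
          + V (r (s, t₁))))
        = ∫ s in (0:ℝ)..1, ((1 / 2) * (v (s, t₂) ⬝ᵥ v (s, t₂))
          + (ε ^ 2 / 2) * (ω (s, t₂) ⬝ᵥ (Pk 2).mulVec (ω (s, t₂)))
          + (ε ^ 2 * μ ^ 2 * a / 2) * (n (s, t₂) ⬝ᵥ (Pk a⁻¹).mulVec (n (s, t₂)))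
          + (2 * μ ^ 2)⁻¹ * (κ (s, t₂) ⬝ᵥ (Pk (2 / a)).mulVec (κ (s, t₂)))
          + V (r (s, t₂))) := by
  have hflux : ∀ t, energyFlux μ a v ω n κ (0, t) = energyFlux μ a v ω n κ (1, t) := fun t => by
    obtain ⟨hv0, hω0, hn1, hκ1⟩ := hbc t
    simp [energyFlux, hv0, hω0, hn1, hκ1]
  have hbalance : ∀ p : ℝ × ℝ, p.1 ∈ Icc (0 : ℝ) 1 →
      pt (energyDensity ε μ a r v ω n κ V) p = ps (energyFlux μ a v ω n κ) p :=
    fun p hp => pt_energyDensity_eq_ps_energyFlux (hr.differentiable one_ne_zero)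
      (hv.differentiable one_ne_zero) (hω.differentiable one_ne_zero)
      (hn.differentiable one_ne_zero) (hκ.differentiable one_ne_zero)
      (hV.differentiable one_ne_zero) (hD p) (hkin p hp) (hstrain p hp) (hcompat p hp)
      (hlin p hp) (hang p hp)
  exact intervalIntegral_eq_of_pt_eq_ps zero_le_one
    (contDiff_energyDensity hr hv hω hn hκ hV) (contDiff_energyFlux hv hω hn hκ) hbalance hflux

/-- energy conservation of the ε-dependent Cosserat rod system for a
cantilever beam: under the rod system on `[0,1] × ℝ` with boundary conditions
`v(0,t) = 0`, `ω(0,t) = 0`, `n(1,t) = 0`, `κ(1,t) = 0`, the total energy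
`E_ε(t) = ∫₀¹ [½‖v‖² + (ε²/2)ω·(P₂·ω) + (ε²μ²a/2)n·(P_{1/a}·n) + (2μ²)⁻¹κ·(P_{2/a}·κ) + V(r̆)] ds`
is constant in `t`. -/
theorem cosserat_energy_conservation_cantilever
    (ε μ a : ℝ) (hε : 0 ≤ ε) (hμ : 0 < μ) (ha : 0 < a)
    (r v ω n κ : ℝ × ℝ → Fin 3 → ℝ)
    (hr : ContDiff ℝ 1 r) (hv : ContDiff ℝ 1 v) (hω : ContDiff ℝ 1 ω)
    (hn : ContDiff ℝ 1 n) (hκ : ContDiff ℝ 1 κ)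
    (D : ℝ × ℝ → Matrix (Fin 3) (Fin 3) ℝ)
    (hD : ∀ p : ℝ × ℝ, D p * (D p)ᵀ = 1)
    (V : (Fin 3 → ℝ) → ℝ) (hV : ContDiff ℝ 1 V)
    (hkin : ∀ p : ℝ × ℝ, p.1 ∈ Set.Icc (0:ℝ) 1 → (D p).mulVec (pt r p) = v p)
    (hstrain : ∀ p : ℝ × ℝ, p.1 ∈ Set.Icc (0:ℝ) 1 →
      (ε ^ 2 * μ ^ 2 * a) • (Pk a⁻¹).mulVec (pt n p)
        = ps v p + cross3 (κ p) (v p) + cross3 ![0, 0, 1] (ω p)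
          + (ε ^ 2 * μ ^ 2 * a) • cross3 ((Pk a⁻¹).mulVec (n p)) (ω p))
    (hcompat : ∀ p : ℝ × ℝ, p.1 ∈ Set.Icc (0:ℝ) 1 →
      pt κ p = ps ω p + cross3 (κ p) (ω p))
    (hlin : ∀ p : ℝ × ℝ, p.1 ∈ Set.Icc (0:ℝ) 1 →
      pt v p = ps n p + cross3 (κ p) (n p) + cross3 (v p) (ω p)
        + (D p).mulVec (-(grad3 V (r p))))
    (hang : ∀ p : ℝ × ℝ, p.1 ∈ Set.Icc (0:ℝ) 1 →
      (ε ^ 2) • (Pk 2).mulVec (pt ω p)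
        = (μ ^ 2)⁻¹ • ((Pk (2 / a)).mulVec (ps κ p)
            + cross3 (κ p) ((Pk (2 / a)).mulVec (κ p)))
          + cross3 ![0, 0, 1] (n p)
          + (ε ^ 2) • ((μ ^ 2 * a) • cross3 ((Pk a⁻¹).mulVec (n p)) (n p)
            + cross3 ((Pk 2).mulVec (ω p)) (ω p)))
    (hbc : ∀ t : ℝ, v (0, t) = 0 ∧ ω (0, t) = 0 ∧ n (1, t) = 0 ∧ κ (1, t) = 0) :
    ∀ t₁ t₂ : ℝ,
      (∫ s in (0:ℝ)..1, ((1 / 2) * (v (s, t₁) ⬝ᵥ v (s, t₁))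
          + (ε ^ 2 / 2) * (ω (s, t₁) ⬝ᵥ (Pk 2).mulVec (ω (s, t₁)))
          + (ε ^ 2 * μ ^ 2 * a / 2) * (n (s, t₁) ⬝ᵥ (Pk a⁻¹).mulVec (n (s, t₁)))
          + (2 * μ ^ 2)⁻¹ * (κ (s, t₁) ⬝ᵥ (Pk (2 / a)).mulVec (κ (s, t₁)))
          + V (r (s, t₁))))
        = ∫ s in (0:ℝ)..1, ((1 / 2) * (v (s, t₂) ⬝ᵥ v (s, t₂))
          + (ε ^ 2 / 2) * (ω (s, t₂) ⬝ᵥ (Pk 2).mulVec (ω (s, t₂)))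
          + (ε ^ 2 * μ ^ 2 * a / 2) * (n (s, t₂) ⬝ᵥ (Pk a⁻¹).mulVec (n (s, t₂)))
          + (2 * μ ^ 2)⁻¹ * (κ (s, t₂) ⬝ᵥ (Pk (2 / a)).mulVec (κ (s, t₂)))
          + V (r (s, t₂))) :=
  cosserat_energy_conservation_cantilever_general ε μ a r v ω n κ hr hv hω hn hκ D hD V hV hkin
    hstrain hcompat hlin hang hbc
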